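/- Lemma 2.1. Let Γ be an R-submodule of the lcsc R-module G and 𝕏→𝕏′=(X,𝒳′,μ,G)→𝕐 a short factors series. If φ∈L²(X,𝒳′,μ) has precompact Γ-orbit, i.e. Γ[φ]={U_gφ : g∈Γ} is precompact in (L²(X,𝒳′,μ),‖·‖₂), then φ∈L²_FKaap(X,𝒳′,μ,G:Γ). -/

import Mathlib

open MeasureTheory Filter Set Topology
open scoped ENNReal

noncomputable section

namespace FE

variable {R G X Y : Type*}

/-- The disintegration `μ = ∫_Y μ_y dν(y)` of `μ` over an extension `π : X → Y`:
each `μ_y` is a probability measure on `X`, `y ↦ μ_y B` is measurable, and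
`μ (B ∩ π⁻¹ A) = ∫_A μ_y B dν`, coding `μ_{π x} B = E_μ(1_B | π⁻¹[𝒴])(x)`. -/
structure Disintegration [mXa : MeasurableSpace X] [mYa : MeasurableSpace Y]
    (μ : Measure X) (ν : Measure Y) (π : X → Y)
    (μy : Y → Measure X) : Prop where
  prob : ∀ y, IsProbabilityMeasure (μy y)
  meas : ∀ B : Set X, MeasurableSet B → Measurable fun y => μy y B
  eq : ∀ B : Set X, MeasurableSet B → ∀ A : Set Y, MeasurableSet A →
    μ (B ∩ π ⁻¹' A) = ∫⁻ y in A, μy y B ∂ν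

/-- The relative product (condition-independent) measure `μ ⊗_Y μ = ∫_Y μ_y ⊗ μ_y dν`. -/
def relProd [mXa : MeasurableSpace X] [mYa : MeasurableSpace Y]
    (ν : Measure Y) (μy : Y → Measure X) : Measure (X × X) :=
  ν.bind fun y => (μy y).prod (μy y)

/-- The relative convolution `H *_Y φ (x) = ∫_X H(x,x') φ(x') dμ_{π x}(x')`. -/
def relConv [mXa : MeasurableSpace X] (μy : Y → Measure X) (π : X → Y)
    (H : X × X → ℂ) (φ : X → ℂ) : X → ℂ :=
  fun x => ∫ x', H (x, x') * φ x' ∂(μy (π x))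

/-- Membership in `L²(X, 𝒳', μ)` where `m'` is a sub-σ-algebra `𝒳'`. -/
def MemL2 (m' : MeasurableSpace X) [mXa : MeasurableSpace X] (μ : Measure X)
    (φ : X → ℂ) : Prop :=
  Measurable[m'] φ ∧ MemLp φ 2 μ

/-- Essential boundedness. -/
def BddAE {α : Type*} [MeasurableSpace α] (ρ : Measure α) (f : α → ℂ) : Prop :=
  ∃ C : ℝ, ∀ᵐ a ∂ρ, ‖f a‖ ≤ C

/-- `φ` is FK almost periodic for `Γ`: for every `ε > 0` there are finitely many
`ψ₁, …, ψ_k ∈ L²(X, 𝒳, μ)` such that for every `g ∈ Γ`,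
`min_j ‖U_g φ − ψ_j‖_{2,y} < ε` for ν-a.e. `y`. -/
def IsFKap [mXa : MeasurableSpace X] [mYa : MeasurableSpace Y] (act : G → X → X)
    (μ : Measure X) (ν : Measure Y) (μy : Y → Measure X)
    (Γ : Set G) (φ : X → ℂ) : Prop :=
  ∀ ε : ℝ, 0 < ε → ∃ (k : ℕ) (ψ : Fin k → X → ℂ),
    (∀ j, MemLp (ψ j) 2 μ) ∧
    ∀ g ∈ Γ, ∀ᵐ y ∂ν,
      ∃ j, eLpNorm (fun x => φ (act g x) - ψ j x) 2 (μy y) < ENNReal.ofReal ε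

/-- `φ` is FK ν-almost almost-periodic for `Γ`: for all `δ, ε > 0` there are finitely many
`ψ₁, …, ψ_k ∈ L²(X, 𝒳, μ)` such that for every `g ∈ Γ`,
`min_j ‖U_g φ − ψ_j‖_{2,y} < ε` outside a set of `y` of ν-measure less than `δ`. -/
def IsFKaap [mXa : MeasurableSpace X] [mYa : MeasurableSpace Y] (act : G → X → X)
    (μ : Measure X) (ν : Measure Y) (μy : Y → Measure X)
    (Γ : Set G) (φ : X → ℂ) : Prop :=
  ∀ δ ε : ℝ, 0 < δ → 0 < ε → ∃ (k : ℕ) (ψ : Fin k → X → ℂ),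
    (∀ j, MemLp (ψ j) 2 μ) ∧
    ∀ g ∈ Γ,
      ν {y | ¬ ∃ j, eLpNorm (fun x => φ (act g x) - ψ j x) 2 (μy y) < ENNReal.ofReal ε}
        < ENNReal.ofReal δ

/-- The extension `π : 𝕏' → 𝕐` is relatively compact for `Γ`:
the FK a.p. (for `Γ`) functions are dense in `L²(X, 𝒳', μ)`. -/
def RelCompact (m' : MeasurableSpace X) [mXa : MeasurableSpace X] [mYa : MeasurableSpace Y]
    (act : G → X → X) (μ : Measure X) (ν : Measure Y) (μy : Y → Measure X)
    (Γ : Set G) : Prop :=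
  ∀ φ : X → ℂ, MemL2 m' μ φ → ∀ ε : ℝ, 0 < ε →
    ∃ ψ : X → ℂ, MemL2 m' μ ψ ∧ IsFKap act μ ν μy Γ ψ ∧
      eLpNorm (fun x => φ x - ψ x) 2 μ < ENNReal.ofReal ε

/-- `H` is invariant (a.e. with respect to `ρ`) for the diagonal `Γ`-action on `X × X`. -/
def DiagInvariant [mXa : MeasurableSpace X] (act : G → X → X) (ρ : Measure (X × X)) (Γ : Set G)
    (H : X × X → ℂ) : Prop :=
  ∀ g ∈ Γ, (fun p : X × X => H (act g p.1, act g p.2)) =ᵐ[ρ] H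

/-- The extension `π : 𝕏' → 𝕐` is jointly relatively weak-mixing for `Γ`:
every `Γ`-invariant `H ∈ L²(X×X, 𝒳'⊗𝒳', μ⊗_Yμ)` is a.e. a function on `𝕐`
via `π ×_Y π`. -/
def JointRelWM (m' : MeasurableSpace X) [mXa : MeasurableSpace X] [mYa : MeasurableSpace Y]
    (act : G → X → X) (ν : Measure Y) (μy : Y → Measure X) (π : X → Y)
    (Γ : Set G) : Prop :=
  ∀ H : X × X → ℂ, Measurable[m'.prod m'] H → MemLp H 2 (relProd ν μy) →
    DiagInvariant act (relProd ν μy) Γ H →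
    ∃ h : Y → ℂ, Measurable h ∧ H =ᵐ[relProd ν μy] fun p => h (π p.1)

/-- The extension of `𝕐` with σ-algebra `m'` on `X` is nontrivial:
`π⁻¹[𝒴] ≠ m'` (μ-mod 0). -/
def NontrivialExt (m' : MeasurableSpace X) [mXa : MeasurableSpace X] [mYa : MeasurableSpace Y]
    (μ : Measure X) (π : X → Y) : Prop :=
  ∃ A : Set X, MeasurableSet[m'] A ∧
    ∀ B : Set Y, MeasurableSet B → μ (symmDiff A (π ⁻¹' B)) ≠ 0

/-- The extension `π : 𝕏' → 𝕐` is jointly relatively ergodic for `Γ`: every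
`Γ`-invariant `f ∈ L^∞(X, 𝒳', μ)` is μ-a.e. a function on `𝕐`. -/
def JointRelErg (m' : MeasurableSpace X) [mXa : MeasurableSpace X] [mYa : MeasurableSpace Y]
    (act : G → X → X) (μ : Measure X) (π : X → Y) (Γ : Set G) : Prop :=
  ∀ f : X → ℂ, Measurable[m'] f → MemLp f ⊤ μ →
    (∀ g ∈ Γ, (fun x => f (act g x)) =ᵐ[μ] f) →
    ∃ h : Y → ℂ, Measurable h ∧ f =ᵐ[μ] fun x => h (π x)

/-- `Γ` is an `R`-submodule of the `R`-module `G` (with scalar action `σ`):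
a subgroup closed under scalar multiplication. -/
def IsSubmoduleSet [Group G] (σ : R → G → G) (Γ : Set G) : Prop :=
  (1 : G) ∈ Γ ∧ (∀ a ∈ Γ, ∀ b ∈ Γ, a * b ∈ Γ) ∧ (∀ a ∈ Γ, a⁻¹ ∈ Γ) ∧
    ∀ t : R, ∀ a ∈ Γ, σ t a ∈ Γ

/-- `G` is a Noetherian `R`-module: the ascending chain condition on `R`-submodules. -/
def NoetherianModule [Group G] (σ : R → G → G) : Prop :=
  ∀ c : ℕ → Set G, (∀ n, IsSubmoduleSet σ (c n)) → (∀ n, c n ⊆ c (n + 1)) →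
    ∃ N, ∀ n, N ≤ n → c n = c N

/-- The ring `R` is syndetic: for every `r ≠ 0` the set `rR` is syndetic in `R`,
i.e. `K + rR = R` for some compact `K`. -/
def SyndeticRing (R : Type*) [Ring R] [TopologicalSpace R] : Prop :=
  ∀ r : R, r ≠ 0 → ∃ K : Set R, IsCompact K ∧ ∀ x : R, ∃ k ∈ K, ∃ s : R, x = k + r * s

/-- The extension `π : 𝕏' → 𝕐` is totally relatively weak-mixing for `Γ`:
for every `g ∈ Γ` with `g ≠ I`, every `⟨g⟩_R`-invariant `H ∈ L²(μ⊗_Yμ)` is a.e.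
a function on `𝕐`. -/
def TotallyRelWM (m' : MeasurableSpace X) [mXa : MeasurableSpace X] [mYa : MeasurableSpace Y]
    [Group G] (σ : R → G → G) (act : G → X → X) (ν : Measure Y)
    (μy : Y → Measure X) (π : X → Y) (Γ : Set G) : Prop :=
  ∀ g ∈ Γ, g ≠ (1 : G) →
    JointRelWM m' act ν μy π (Set.range fun t : R => σ t g)

/-- The extension `π : (X, m', μ, G) → 𝕐` is primitive. -/
def PrimitiveExt (m' : MeasurableSpace X) [mXa : MeasurableSpace X] [mYa : MeasurableSpace Y]
    [Group G] (σ : R → G → G) (act : G → X → X) (μ : Measure X) (ν : Measure Y)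
    (μy : Y → Measure X) (π : X → Y) : Prop :=
  TotallyRelWM m' σ act ν μy π Set.univ ∨
  RelCompact m' act μ ν μy Set.univ ∨
  ∃ Grc Grw : Set G, IsSubmoduleSet σ Grc ∧ IsSubmoduleSet σ Grw ∧
    Grc ≠ ({1} : Set G) ∧ Grw ≠ ({1} : Set G) ∧ Grc ∩ Grw = ({1} : Set G) ∧
    (∀ g : G, ∃ a ∈ Grc, ∃ b ∈ Grw, g = a * b) ∧
    RelCompact m' act μ ν μy Grc ∧ TotallyRelWM m' σ act ν μy π Grw

/-- Condition C1: the relative convolutions `H *_Y φ`, with `H` bounded `Γ`-invariant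
in `L²(μ⊗_Yμ)` and `φ` bounded in `L²(X,𝒳',μ)`, span a dense subspace of `L²(X,𝒳',μ)`. -/
def C1 (m' : MeasurableSpace X) [mXa : MeasurableSpace X] [mYa : MeasurableSpace Y]
    (act : G → X → X) (μ : Measure X) (ν : Measure Y) (μy : Y → Measure X)
    (π : X → Y) (Γ : Set G) : Prop :=
  ∀ f : X → ℂ, MemL2 m' μ f → ∀ ε : ℝ, 0 < ε →
    ∃ (k : ℕ) (c : Fin k → ℂ) (H : Fin k → X × X → ℂ) (φ : Fin k → X → ℂ),
      (∀ i, Measurable[m'.prod m'] (H i) ∧ MemLp (H i) 2 (relProd ν μy) ∧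
        BddAE (relProd ν μy) (H i) ∧ DiagInvariant act (relProd ν μy) Γ (H i)) ∧
      (∀ i, MemL2 m' μ (φ i) ∧ BddAE μ (φ i)) ∧
      eLpNorm (fun x => f x - ∑ i, c i * relConv μy π (H i) (φ i) x) 2 μ
        < ENNReal.ofReal ε

/-- Condition C2: the FK a.p. (for `Γ`) functions are dense in `L²(X,𝒳',μ)`. -/
def C2 (m' : MeasurableSpace X) [mXa : MeasurableSpace X] [mYa : MeasurableSpace Y]
    (act : G → X → X) (μ : Measure X) (ν : Measure Y) (μy : Y → Measure X)
    (Γ : Set G) : Prop :=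
  RelCompact m' act μ ν μy Γ

/-- Condition C3: every `φ ∈ L²(X,𝒳',μ)` admits, for each `δ > 0`, a set `B ∈ 𝒴` with
`ν(B) > 1 − δ` such that the modification `φ_B = 1_{π⁻¹[B]}·φ` is FK a.p. for `Γ`. -/
def C3 (m' : MeasurableSpace X) [mXa : MeasurableSpace X] [mYa : MeasurableSpace Y]
    (act : G → X → X) (μ : Measure X) (ν : Measure Y) (μy : Y → Measure X)
    (π : X → Y) (Γ : Set G) : Prop :=
  ∀ φ : X → ℂ, MemL2 m' μ φ → ∀ δ : ℝ, 0 < δ →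
    ∃ B : Set Y, MeasurableSet B ∧ 1 - δ < (ν B).toReal ∧
      IsFKap act μ ν μy Γ ((π ⁻¹' B).indicator φ)

/-- Condition C4: every `φ ∈ L²(X,𝒳',μ)` is FK ν-almost almost-periodic for `Γ`. -/
def C4 (m' : MeasurableSpace X) [mXa : MeasurableSpace X] [mYa : MeasurableSpace Y]
    (act : G → X → X) (μ : Measure X) (ν : Measure Y) (μy : Y → Measure X)
    (Γ : Set G) : Prop :=
  ∀ φ : X → ℂ, MemL2 m' μ φ → IsFKaap act μ ν μy Γ φ

/-- A measure on `G` carried by `Γ` and left-invariant under elements of `Γ`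
(a left Haar measure of `Γ`). -/
def LeftInvariantOn [Group G] [MeasurableSpace G] (mΓ : Measure G) (Γ : Set G) : Prop :=
  mΓ Γᶜ = 0 ∧
    ∀ g ∈ Γ, ∀ A : Set G, MeasurableSet A → mΓ ((fun h => g * h) ⁻¹' A) = mΓ A

/-- A weak Følner sequence in `Γ` for the measure `mΓ`. -/
def IsWeakFolner [Group G] [TopologicalSpace G] [MeasurableSpace G]
    (mΓ : Measure G) (Γ : Set G) (F : ℕ → Set G) : Prop :=
  (∀ n, IsCompact (F n)) ∧ (∀ n, F n ⊆ Γ) ∧ (∀ n, 0 < mΓ (F n)) ∧ (∀ n, mΓ (F n) < ⊤) ∧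
    ∀ g ∈ Γ, Tendsto (fun n => mΓ (symmDiff ((fun h => g * h) '' F n) (F n)) / mΓ (F n))
      atTop (nhds 0)

/-- The Følner average `(1/m_Γ(F_n)) ∫_{F_n} U_g (φ ⊗ φ̄) dg` as a function on `X × X`. -/
def FolnerAvg [MeasurableSpace G] (act : G → X → X) (mΓ : Measure G) (F : ℕ → Set G)
    (φ : X → ℂ) (n : ℕ) : X × X → ℂ :=
  fun p => (mΓ (F n)).toReal⁻¹ •
    ∫ g in F n, φ (act g p.1) * (starRingEnd ℂ) (φ (act g p.2)) ∂mΓ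

/-- Condition C5: for any weak Følner sequence in `Γ` and any `φ ∈ L²(X,𝒳',μ)`,
the weak `L²(μ⊗_Yμ)`-limit `P(φ⊗φ̄)` of the Følner averages vanishes iff `φ = 0`. -/
def C5 (m' : MeasurableSpace X) [mXa : MeasurableSpace X] [mYa : MeasurableSpace Y]
    [Group G] [TopologicalSpace G] [MeasurableSpace G]
    (act : G → X → X) (μ : Measure X) (ν : Measure Y) (μy : Y → Measure X)
    (Γ : Set G) : Prop :=
  ∀ mΓ : Measure G, LeftInvariantOn mΓ Γ →
  ∀ F : ℕ → Set G, IsWeakFolner mΓ Γ F →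
  ∀ φ : X → ℂ, MemL2 m' μ φ →
  ∀ P : X × X → ℂ, MemLp P 2 (relProd ν μy) →
    (∀ ψ : X × X → ℂ, MemLp ψ 2 (relProd ν μy) →
      Tendsto
        (fun n => ∫ p, FolnerAvg act mΓ F φ n p * (starRingEnd ℂ) (ψ p) ∂(relProd ν μy))
        atTop (nhds (∫ p, P p * (starRingEnd ℂ) (ψ p) ∂(relProd ν μy)))) →
    (P =ᵐ[relProd ν μy] 0 ↔ φ =ᵐ[μ] 0)

/-- Condition C6: as C5 but with the limit taken in the `L²(μ⊗_Yμ)`-norm. -/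
def C6 (m' : MeasurableSpace X) [mXa : MeasurableSpace X] [mYa : MeasurableSpace Y]
    [Group G] [TopologicalSpace G] [MeasurableSpace G]
    (act : G → X → X) (μ : Measure X) (ν : Measure Y) (μy : Y → Measure X)
    (Γ : Set G) : Prop :=
  ∀ mΓ : Measure G, LeftInvariantOn mΓ Γ →
  ∀ F : ℕ → Set G, IsWeakFolner mΓ Γ F →
  ∀ φ : X → ℂ, MemL2 m' μ φ →
  ∀ P : X × X → ℂ, MemLp P 2 (relProd ν μy) →
    Tendsto (fun n => eLpNorm (fun p => FolnerAvg act mΓ F φ n p - P p) 2 (relProd ν μy))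
      atTop (nhds 0) →
    (P =ᵐ[relProd ν μy] 0 ↔ φ =ᵐ[μ] 0)

/-- Disintegration of `μ` over a factor given by a sub-σ-algebra `m₁` of the ambient
σ-algebra, via conditional measures `μc x`. -/
structure CondDisint (m₁ : MeasurableSpace X) [mXa : MeasurableSpace X] (μ : Measure X)
    (μc : X → Measure X) : Prop where
  prob : ∀ x, IsProbabilityMeasure (μc x)
  meas : ∀ B : Set X, MeasurableSet B → Measurable[m₁] fun x => μc x B
  eq : ∀ B : Set X, MeasurableSet B → ∀ A : Set X, MeasurableSet[m₁] A →
    μ (B ∩ A) = ∫⁻ x in A, μc x B ∂μ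

/-- The relative product measure over a factor via conditional measures. -/
def relProdC [mXa : MeasurableSpace X] (μ : Measure X) (μc : X → Measure X) : Measure (X × X) :=
  μ.bind fun x => (μc x).prod (μc x)

/-- FK almost periodicity, fiber measures given by conditional measures. -/
def IsFKapC [mXa : MeasurableSpace X] (act : G → X → X) (μ : Measure X) (μc : X → Measure X)
    (Γ : Set G) (φ : X → ℂ) : Prop :=
  ∀ ε : ℝ, 0 < ε → ∃ (k : ℕ) (ψ : Fin k → X → ℂ),
    (∀ j, MemLp (ψ j) 2 μ) ∧
    ∀ g ∈ Γ, ∀ᵐ x ∂μ,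
      ∃ j, eLpNorm (fun z => φ (act g z) - ψ j z) 2 (μc x) < ENNReal.ofReal ε

/-- FK almost almost-periodicity, fiber measures given by conditional measures. -/
def IsFKaapC [mXa : MeasurableSpace X] (act : G → X → X) (μ : Measure X) (μc : X → Measure X)
    (Γ : Set G) (φ : X → ℂ) : Prop :=
  ∀ δ ε : ℝ, 0 < δ → 0 < ε → ∃ (k : ℕ) (ψ : Fin k → X → ℂ),
    (∀ j, MemLp (ψ j) 2 μ) ∧
    ∀ g ∈ Γ,
      μ {x | ¬ ∃ j, eLpNorm (fun z => φ (act g z) - ψ j z) 2 (μc x) < ENNReal.ofReal ε}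
        < ENNReal.ofReal δ

/-- Relative compactness of the extension `(X,m₂,μ,G) → (X,m₁,μ,G)` for `Γ`,
with conditional measures `μc` over the base `m₁`. -/
def RelCompactC (m₂ : MeasurableSpace X) [mXa : MeasurableSpace X]
    (act : G → X → X) (μ : Measure X) (μc : X → Measure X) (Γ : Set G) : Prop :=
  ∀ φ : X → ℂ, MemL2 m₂ μ φ → ∀ ε : ℝ, 0 < ε →
    ∃ ψ : X → ℂ, MemL2 m₂ μ ψ ∧ IsFKapC act μ μc Γ ψ ∧
      eLpNorm (fun x => φ x - ψ x) 2 μ < ENNReal.ofReal ε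

/-- Relative C4-compactness: every function of `L²(X,m₂,μ)` is FK a.a.p. for `Γ`
relative to the base factor (whose conditional measures are `μc`). -/
def RelC4CompactC (m₂ : MeasurableSpace X) [mXa : MeasurableSpace X]
    (act : G → X → X) (μ : Measure X) (μc : X → Measure X) (Γ : Set G) : Prop :=
  ∀ φ : X → ℂ, MemL2 m₂ μ φ → IsFKaapC act μ μc Γ φ

/-- Joint relative weak-mixing of `(X,m₂,μ,G) → (X,m₁,μ,G)` for `Γ`. -/
def JointRelWMC (m₂ m₁ : MeasurableSpace X) [mXa : MeasurableSpace X]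
    (act : G → X → X) (μ : Measure X) (μc : X → Measure X) (Γ : Set G) : Prop :=
  ∀ H : X × X → ℂ, Measurable[m₂.prod m₂] H → MemLp H 2 (relProdC μ μc) →
    DiagInvariant act (relProdC μ μc) Γ H →
    ∃ h : X → ℂ, Measurable[m₁] h ∧ H =ᵐ[relProdC μ μc] fun p => h p.1

/-- Total relative weak-mixing of `(X,m₂,μ,G) → (X,m₁,μ,G)` for `Γ`. -/
def TotallyRelWMC (m₂ m₁ : MeasurableSpace X) [mXa : MeasurableSpace X] [Group G]
    (σ : R → G → G) (act : G → X → X) (μ : Measure X)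
    (μc : X → Measure X) (Γ : Set G) : Prop :=
  ∀ g ∈ Γ, g ≠ (1 : G) →
    JointRelWMC m₂ m₁ act μ μc (Set.range fun t : R => σ t g)

/-- Primitivity of the extension `(X,m₂,μ,G) → (X,m₁,μ,G)`. -/
def PrimitiveExtC (m₂ m₁ : MeasurableSpace X) [mXa : MeasurableSpace X] [Group G]
    (σ : R → G → G) (act : G → X → X) (μ : Measure X)
    (μc : X → Measure X) : Prop :=
  TotallyRelWMC m₂ m₁ σ act μ μc Set.univ ∨
  RelCompactC m₂ act μ μc Set.univ ∨
  ∃ Grc Grw : Set G, IsSubmoduleSet σ Grc ∧ IsSubmoduleSet σ Grw ∧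
    Grc ≠ ({1} : Set G) ∧ Grw ≠ ({1} : Set G) ∧ Grc ∩ Grw = ({1} : Set G) ∧
    (∀ g : G, ∃ a ∈ Grc, ∃ b ∈ Grw, g = a * b) ∧
    RelCompactC m₂ act μ μc Grc ∧ TotallyRelWMC m₂ m₁ σ act μ μc Grw

/-- Nontriviality of the extension given by the pair of σ-algebras `m₂ ⊇ m₁` (μ-mod 0). -/
def NontrivialPair (m₂ m₁ : MeasurableSpace X) [mXa : MeasurableSpace X]
    (μ : Measure X) : Prop :=
  ∃ A : Set X, MeasurableSet[m₂] A ∧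
    ∀ B : Set X, MeasurableSet[m₁] B → μ (symmDiff A B) ≠ 0

/-- Equality of two σ-algebras μ-mod 0. -/
def EqMod0 (m₁ m₂ : MeasurableSpace X) [mXa : MeasurableSpace X] (μ : Measure X) : Prop :=
  (∀ A : Set X, MeasurableSet[m₁] A → ∃ B, MeasurableSet[m₂] B ∧ μ (symmDiff A B) = 0) ∧
  (∀ A : Set X, MeasurableSet[m₂] A → ∃ B, MeasurableSet[m₁] B ∧ μ (symmDiff A B) = 0)

end FE

/-! The `Γ`-orbit of `φ` is covered by finitely many `L²(μ)`-balls of radius `ε√δ`. Since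
`μ = ∫ μ_y dν`, the squared norm `‖U_g φ - ψ_j‖₂²` is the `ν`-average of the fibre norms
`‖U_g φ - ψ_j‖_{2,y}²`, so by Markov's inequality these exceed `ε²` only on a set of
`ν`-measure less than `δ`. -/

theorem eLpNorm_two_sq_eq_lintegral {X E : Type*} [MeasurableSpace X] [NormedAddCommGroup E]
    (f : X → E) (ρ : Measure X) : eLpNorm f 2 ρ ^ 2 = ∫⁻ x, ‖f x‖ₑ ^ 2 ∂ρ := by
  simpa using eLpNorm_nnreal_pow_eq_lintegral (f := f) (μ := ρ) (p := 2) two_ne_zero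

namespace FE.Disintegration

variable {X Y E : Type*} [MeasurableSpace X] [MeasurableSpace Y]
  [NormedAddCommGroup E] [MeasurableSpace E] [OpensMeasurableSpace E]
  {μ : Measure X} {ν : Measure Y} {π : X → Y} {μy : Y → Measure X}

theorem measurable (hdis : Disintegration μ ν π μy) : Measurable μy :=
  Measure.measurable_of_measurable_coe _ hdis.meas

theorem bind_eq (hdis : Disintegration μ ν π μy) : ν.bind μy = μ := by
  ext B hB
  rw [Measure.bind_apply hB hdis.measurable.aemeasurable]
  simpa using (hdis.eq B hB univ MeasurableSet.univ).symm

theorem lintegral_lintegral (hdis : Disintegration μ ν π μy) {f : X → ℝ≥0∞}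
    (hf : Measurable f) : ∫⁻ y, ∫⁻ x, f x ∂μy y ∂ν = ∫⁻ x, f x ∂μ := by
  rw [← hdis.bind_eq, Measure.lintegral_bind hdis.measurable.aemeasurable hf.aemeasurable]

theorem measurable_eLpNorm_two_sq (hdis : Disintegration μ ν π μy) {f : X → E}
    (hf : Measurable f) : Measurable fun y => eLpNorm f 2 (μy y) ^ 2 := by
  simp only [eLpNorm_two_sq_eq_lintegral]
  exact (Measure.measurable_lintegral (hf.enorm.pow_const 2)).comp hdis.measurable

theorem lintegral_eLpNorm_two_sq (hdis : Disintegration μ ν π μy) {f : X → E}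
    (hf : Measurable f) : ∫⁻ y, eLpNorm f 2 (μy y) ^ 2 ∂ν = eLpNorm f 2 μ ^ 2 := by
  simp only [eLpNorm_two_sq_eq_lintegral]
  exact hdis.lintegral_lintegral (hf.enorm.pow_const 2)

theorem mul_measure_le_eLpNorm_two_sq (hdis : Disintegration μ ν π μy) {f : X → E}
    (hf : Measurable f) (c : ℝ≥0∞) :
    c ^ 2 * ν {y | c ≤ eLpNorm f 2 (μy y)} ≤ eLpNorm f 2 μ ^ 2 :=
  calc c ^ 2 * ν {y | c ≤ eLpNorm f 2 (μy y)}
      = c ^ 2 * ν {y | c ^ 2 ≤ eLpNorm f 2 (μy y) ^ 2} := by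
        simp only [ENNReal.pow_le_pow_left_iff two_ne_zero]
    _ ≤ ∫⁻ y, eLpNorm f 2 (μy y) ^ 2 ∂ν :=
        mul_meas_ge_le_lintegral₀ (hdis.measurable_eLpNorm_two_sq hf).aemeasurable _
    _ = eLpNorm f 2 μ ^ 2 := hdis.lintegral_eLpNorm_two_sq hf

theorem measure_setOf_le_eLpNorm_lt (hdis : Disintegration μ ν π μy) {f : X → E}
    (hf : Measurable f) {ε δ : ℝ} (hε : 0 < ε) (hδ : 0 ≤ δ)
    (hfμ : eLpNorm f 2 μ < ENNReal.ofReal (ε * √δ)) :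
    ν {y | ENNReal.ofReal ε ≤ eLpNorm f 2 (μy y)} < ENNReal.ofReal δ := by
  have hε2 : ENNReal.ofReal ε ^ 2 ≠ 0 := by simp [hε]
  refine (ENNReal.mul_lt_mul_iff_right hε2 (by simp)).mp ?_
  calc ENNReal.ofReal ε ^ 2 * ν {y | ENNReal.ofReal ε ≤ eLpNorm f 2 (μy y)}
      ≤ eLpNorm f 2 μ ^ 2 := hdis.mul_measure_le_eLpNorm_two_sq hf _
    _ < ENNReal.ofReal (ε * √δ) ^ 2 := (ENNReal.pow_lt_pow_left_iff two_ne_zero).mpr hfμ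
    _ = ENNReal.ofReal ε ^ 2 * ENNReal.ofReal δ := by
        rw [← ENNReal.ofReal_pow hε.le, ← ENNReal.ofReal_mul (by positivity),
          ← ENNReal.ofReal_pow (by positivity), mul_pow, Real.sq_sqrt hδ]

end FE.Disintegration

theorem lemma_2_1_general
    {G X Y : Type*}
    [MeasurableSpace G]
    (m' : MeasurableSpace X)
    [mX : MeasurableSpace X]
    [mY : MeasurableSpace Y]
    (μ : Measure X)
    (ν : Measure Y)
    (act : G → X → X)
    (hactMeas : Measurable fun p : G × X => act p.1 p.2)
    (π : X → Y)
    (hm'le : m' ≤ mX)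
    (μy : Y → Measure X) (hdis : FE.Disintegration μ ν π μy)
    (Γ : Set G)
    (φ : X → ℂ) (hφ : FE.MemL2 m' μ φ)
    (hpc : ∀ ε : ℝ, 0 < ε → ∃ (k : ℕ) (ψ : Fin k → X → ℂ),
      (∀ j, MemLp (ψ j) 2 μ) ∧
      ∀ g ∈ Γ, ∃ j, eLpNorm (fun x => φ (act g x) - ψ j x) 2 μ < ENNReal.ofReal ε) :
    FE.IsFKaap act μ ν μy Γ φ := by
  intro δ ε hδ hε
  obtain ⟨k, ψ, hψ, hclose⟩ := hpc (ε * √δ) (by positivity)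
  -- The fibre norms see `ψ j` pointwise, not up to `μ`-null sets, so pass to Borel versions.
  let ψ' : Fin k → X → ℂ := fun j => (hψ j).1.mk (ψ j)
  refine ⟨k, ψ', fun j => (hψ j).ae_eq (hψ j).1.ae_eq_mk, fun g hg => ?_⟩
  obtain ⟨j, hj⟩ := hclose g hg
  have hmeas : Measurable fun x => φ (act g x) - ψ' j x :=
    ((hφ.1.mono hm'le le_rfl).comp (hactMeas.comp measurable_prodMk_left)).sub
      (hψ j).1.stronglyMeasurable_mk.measurable
  have hj' : eLpNorm (fun x => φ (act g x) - ψ' j x) 2 μ < ENNReal.ofReal (ε * √δ) :=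
    (eLpNorm_congr_ae (EventuallyEq.rfl.sub (hψ j).1.ae_eq_mk.symm)).trans_lt hj
  refine (measure_mono fun y hy => ?_).trans_lt
    (hdis.measure_setOf_le_eLpNorm_lt hmeas hε hδ.le hj')
  by_contra hlt
  exact hy ⟨j, not_le.mp hlt⟩

/-- **Lemma 2.1.** If `φ ∈ L²(X,𝒳',μ)` has precompact (totally bounded) `Γ`-orbit
`{U_g φ : g ∈ Γ}` in `(L²(X,𝒳',μ), ‖·‖₂)`, then `φ` is FK ν-almost
almost-periodic for `Γ`. -/
theorem lemma_2_1
    {R G X Y : Type*}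
    [Ring R] [TopologicalSpace R] [IsTopologicalAddGroup R]
    [LocallyCompactSpace R] [SecondCountableTopology R] [T2Space R]
    [CommGroup G] [TopologicalSpace G] [IsTopologicalGroup G]
    [LocallyCompactSpace G] [SecondCountableTopology G] [T2Space G]
    [MeasurableSpace G] [BorelSpace G]
    (m' : MeasurableSpace X)
    [mX : MeasurableSpace X] [StandardBorelSpace X]
    [mY : MeasurableSpace Y]
    (σ : R → G → G)
    (hσmul : ∀ (t : R) (S T : G), σ t (S * T) = σ t S * σ t T)
    (hσadd : ∀ (r t : R) (S : G), σ (r + t) S = σ r S * σ t S)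
    (hσcont : Continuous fun p : R × G => σ p.1 p.2)
    (μ : Measure X) [IsProbabilityMeasure μ]
    (ν : Measure Y) [IsProbabilityMeasure ν]
    (act : G → X → X)
    (hact1 : ∀ x, act 1 x = x)
    (hactmul : ∀ g h x, act (g * h) x = act g (act h x))
    (hactMeas : Measurable fun p : G × X => act p.1 p.2)
    (hactμ : ∀ g, MeasurePreserving (act g) μ μ)
    (actY : G → Y → Y)
    (hactY1 : ∀ y, actY 1 y = y)
    (hactYmul : ∀ g h y, actY (g * h) y = actY g (actY h y))
    (hactYMeas : Measurable fun p : G × Y => actY p.1 p.2)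
    (hactYν : ∀ g, MeasurePreserving (actY g) ν ν)
    (π : X → Y) (hπ : Measurable π) (hπmp : MeasurePreserving π μ ν)
    (hπeq : ∀ g x, π (act g x) = actY g (π x))
    (hm'le : m' ≤ mX)
    (hm'Y : MeasurableSpace.comap π mY ≤ m')
    (hm'inv : ∀ (g : G) (A : Set X), MeasurableSet[m'] A → MeasurableSet[m'] (act g ⁻¹' A))
    (μy : Y → Measure X) (hdis : FE.Disintegration μ ν π μy)
    (Γ : Set G) (hΓ : FE.IsSubmoduleSet σ Γ)
    (φ : X → ℂ) (hφ : FE.MemL2 m' μ φ)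
    (hpc : ∀ ε : ℝ, 0 < ε → ∃ (k : ℕ) (ψ : Fin k → X → ℂ),
      (∀ j, MemLp (ψ j) 2 μ) ∧
      ∀ g ∈ Γ, ∃ j, eLpNorm (fun x => φ (act g x) - ψ j x) 2 μ < ENNReal.ofReal ε) :
    FE.IsFKaap act μ ν μy Γ φ :=
  lemma_2_1_general m' (mX := mX) (mY := mY) μ ν act hactMeas π hm'le μy hdis Γ φ hφ hpc
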